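/- Let A be a finitely generated abelian group. Then A is cancellable: for all abelian groups G and H, if A ⊕ G ≅ A ⊕ H then G ≅ H. -/

import Mathlib

/-!
By the structure theorem `A` is a finite product of copies of `ℤ` and of cyclic groups
`ℤ/p^e`, and cancellability passes to finite products. Given `ψ : A × G ≃+ A × H`, the map
`f = fst ∘ ψ : A × G → A` is a split surjection with kernel `≅ H`; if `f` is the first projection
precomposed with an automorphism of `A × G`, its kernel is also `≅ G`.

For `A = ℤ/p^e` the endomorphism ring is local, hence of stable range one, and Evans' shearing
argument produces the automorphism. For `A = ℤ` write `f (n, g) = a n + φ g`: either `φ = 0` and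
`a = ±1`, or `G ≅ ℤ × K` with `φ = m · fst`, `a` and `m` coprime, and a unimodular `2 × 2`
matrix with first row `(a, m)` does the job.
-/

/-- An abelian group `A` is cancellable if for all abelian groups `G` and `H`,
`A ⊕ G ≅ A ⊕ H` implies `G ≅ H`. -/
def Cancellable (A : Type) [AddCommGroup A] : Prop :=
  ∀ (G H : Type) [AddCommGroup G] [AddCommGroup H],
    Nonempty ((A × G) ≃+ (A × H)) → Nonempty (G ≃+ H)

namespace Cancellable

variable {A B : Type} [AddCommGroup A] [AddCommGroup B]

theorem of_addEquiv (e : A ≃+ B) (hA : Cancellable A) : Cancellable B := by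
  rintro G H _ _ ⟨ψ⟩
  exact hA G H ⟨(e.prodCongr (.refl G)).trans (ψ.trans (e.symm.prodCongr (.refl H)))⟩

theorem prod (hA : Cancellable A) (hB : Cancellable B) : Cancellable (A × B) := by
  rintro G H _ _ ⟨ψ⟩
  exact hB G H (hA (B × G) (B × H) ⟨AddEquiv.prodAssoc.symm.trans (ψ.trans AddEquiv.prodAssoc)⟩)

theorem of_subsingleton [Subsingleton A] : Cancellable A := by
  rintro G H _ _ ⟨ψ⟩
  have := uniqueOfSubsingleton (0 : A)
  exact ⟨AddEquiv.uniqueProd.symm.trans (ψ.trans AddEquiv.uniqueProd)⟩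

theorem pi {ι : Type} [Finite ι] (M : ι → Type) [∀ i, AddCommGroup (M i)]
    (h : ∀ i, Cancellable (M i)) : Cancellable (∀ i, M i) := by
  induction ι using Finite.induction_empty_option with
  | of_equiv e ih =>
    exact of_addEquiv (LinearEquiv.piCongrLeft ℤ M e).toAddEquiv (ih _ fun i => h (e i))
  | h_empty => exact of_subsingleton
  | h_option ih =>
    exact of_addEquiv (LinearEquiv.piOptionEquivProd ℤ).symm.toAddEquiv
      ((h none).prod (ih _ fun i => h (some i)))

end Cancellable

section SplitSurjections

variable {A G P : Type} [AddCommGroup A] [AddCommGroup G] [AddCommGroup P]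

noncomputable def AddEquiv.kerEquivOfFst {f : P →+ A} (e : P ≃+ A × G)
    (he : ∀ p, (e p).1 = f p) : f.ker ≃+ G :=
  AddEquiv.ofBijective ((AddMonoidHom.snd A G).comp (e.toAddMonoidHom.comp f.ker.subtype)) <| by
    refine ⟨fun x y hxy => Subtype.ext <| e.injective <| Prod.ext ?_ hxy, fun g => ?_⟩
    · rw [he, he, x.2, y.2]
    · refine ⟨⟨e.symm (0, g), ?_⟩, by simp⟩
      rw [AddMonoidHom.mem_ker, ← he, e.apply_symm_apply]

theorem Cancellable.of_forall_exists_addAut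
    (h : ∀ (G : Type) [AddCommGroup G] (f : A × G →+ A) (s : A →+ A × G),
      Function.RightInverse s f → ∃ Θ : A × G ≃+ A × G, ∀ p, (Θ p).1 = f p) :
    Cancellable A := by
  rintro G H _ _ ⟨ψ⟩
  let f := (AddMonoidHom.fst A H).comp ψ.toAddMonoidHom
  obtain ⟨Θ, hΘ⟩ := h G f (ψ.symm.toAddMonoidHom.comp (.inl A H)) fun x => by simp [f]
  exact ⟨(Θ.kerEquivOfFst hΘ).symm.trans (ψ.kerEquivOfFst fun _ => rfl)⟩

theorem AddMonoidHom.apply_prod_eq_add {B : Type} [AddCommGroup B] (f : A × G →+ B)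
    (p : A × G) : f p = f (p.1, 0) + f (0, p.2) := by
  rw [← map_add, Prod.mk_add_mk, add_zero, zero_add]

theorem exists_addAut_fst_eq_of_isUnit (f : A × G →+ A)
    (hf : IsUnit (M := AddMonoid.End A) (f.comp (AddMonoidHom.inl A G))) :
    ∃ Θ : A × G ≃+ A × G, ∀ p, (Θ p).1 = f p := by
  obtain ⟨u, hu⟩ := hf
  have right_inv (x : A) : f (u⁻¹.val x, 0) = x := by
    have h := DFunLike.congr_fun u.mul_inv x
    rw [hu] at h
    exact h
  have left_inv (x : A) : u⁻¹.val (f (x, 0)) = x := by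
    have h := DFunLike.congr_fun u.inv_mul x
    rw [hu] at h
    exact h
  refine ⟨AddEquiv.ofBijective (f.prod (AddMonoidHom.snd A G)) ⟨?_, ?_⟩, fun _ => rfl⟩
  · rintro p q hpq
    simp only [AddMonoidHom.prod_apply, AddMonoidHom.coe_snd, Prod.mk.injEq] at hpq
    obtain ⟨h1, h2⟩ := hpq
    rw [f.apply_prod_eq_add p, f.apply_prod_eq_add q, h2, add_left_inj] at h1
    exact Prod.ext (by rw [← left_inv p.1, h1, left_inv]) h2
  · rintro ⟨x, g⟩
    refine ⟨(u⁻¹.val (x - f (0, g)), g), ?_⟩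
    rw [AddMonoidHom.prod_apply, f.apply_prod_eq_add, right_inv, sub_add_cancel]
    rfl

end SplitSurjections

def HasStableRangeOne (R : Type*) [Ring R] : Prop :=
  ∀ a b c d : R, a * c + b * d = 1 → ∃ t, IsUnit (a + b * t)

theorem HasStableRangeOne.of_ringEquiv {R S : Type*} [Ring R] [Ring S] (e : R ≃+* S)
    (h : HasStableRangeOne R) : HasStableRangeOne S := by
  intro a b c d habcd
  obtain ⟨t, ht⟩ :=
    h (e.symm a) (e.symm b) (e.symm c) (e.symm d) (by simp [← map_mul, ← map_add, habcd])
  exact ⟨e t, by simpa using ht.map e⟩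

theorem IsLocalRing.hasStableRangeOne (R : Type*) [CommRing R] [IsLocalRing R] :
    HasStableRangeOne R := by
  intro a b c d habcd
  rcases isUnit_or_isUnit_of_add_one habcd with hac | hbd
  · exact ⟨0, by simpa using isUnit_of_mul_isUnit_left hac⟩
  · obtain ⟨v, hv⟩ := isUnit_of_mul_isUnit_left hbd
    exact ⟨↑v⁻¹ * (1 - a), by simp [← mul_assoc, ← hv]⟩

theorem Cancellable.of_hasStableRangeOne {A : Type} [AddCommGroup A]
    (h : HasStableRangeOne (AddMonoid.End A)) : Cancellable A := by
  refine Cancellable.of_forall_exists_addAut fun G _ f s hs => ?_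
  let α : AddMonoid.End A := f.comp (.inl A G)
  let β : G →+ A := f.comp (.inr A G)
  let α' : AddMonoid.End A := (AddMonoidHom.fst A G).comp s
  let β' : A →+ G := (AddMonoidHom.snd A G).comp s
  let b : AddMonoid.End A := β.comp β'
  have hsum : α * α' + b * 1 = 1 := by
    ext x
    show f ((s x).1, 0) + f (0, (s x).2) = x
    rw [← f.apply_prod_eq_add, hs x]
  obtain ⟨t, ht⟩ := h _ _ _ _ hsum
  -- `σ (x, g) = (x, g + β' (t x))` turns the `A`-component of `f` into the unit `α + b * t`.
  let σ : A × G ≃+ A × G :=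
    ((LinearEquiv.refl ℤ A).skewProd (LinearEquiv.refl ℤ G) (β'.comp t).toIntLinearMap).toAddEquiv
  have hσ : (f.comp σ.toAddMonoidHom).comp (.inl A G) = α + b * t := by
    ext x
    show f (x, 0 + β' (t x)) = f (x, 0) + f (0, β' (t x))
    rw [zero_add]
    exact f.apply_prod_eq_add _
  obtain ⟨Θ, hΘ⟩ := exists_addAut_fst_eq_of_isUnit (f.comp σ.toAddMonoidHom) (hσ ▸ ht)
  exact ⟨σ.symm.trans Θ, fun p => by simp [hΘ]⟩

def AddMonoid.End.zmodRingEquiv (n : ℕ) : AddMonoid.End (ZMod n) ≃+* ZMod n :=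
  ({ AddMonoidHom.toZModLinearMapEquiv n with map_mul' := fun _ _ => rfl } :
      AddMonoid.End (ZMod n) ≃+* Module.End (ZMod n) (ZMod n)).trans
    ((RingEquiv.moduleEndSelf (ZMod n)).symm.trans (RingEquiv.toOpposite (ZMod n)).symm)

theorem ZMod.isLocalRing_prime_pow {p e : ℕ} (hp : p.Prime) (he : 0 < e) :
    IsLocalRing (ZMod (p ^ e)) := by
  have : Fact (1 < p ^ e) := ⟨Nat.one_lt_pow he.ne' hp.one_lt⟩
  refine ⟨fun {a b} hab => ?_⟩
  rw [← ZMod.natCast_zmod_val a, ← ZMod.natCast_zmod_val b,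
    ZMod.isUnit_natCast_iff_not_dvd_pow hp he, ZMod.isUnit_natCast_iff_not_dvd_pow hp he,
    ← not_and_or]
  rintro ⟨hpa, hpb⟩
  have : IsUnit ((a.val + b.val : ℕ) : ZMod (p ^ e)) := by simp [hab]
  exact (ZMod.isUnit_natCast_iff_not_dvd_pow hp he).mp this (dvd_add hpa hpb)

theorem cancellable_zmod_prime_pow {p : ℕ} (hp : p.Prime) (e : ℕ) :
    Cancellable (ZMod (p ^ e)) := by
  rcases Nat.eq_zero_or_pos e with rfl | he
  · rw [pow_zero]
    exact Cancellable.of_subsingleton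
  · have := ZMod.isLocalRing_prime_pow hp he
    exact .of_hasStableRangeOne <|
      (IsLocalRing.hasStableRangeOne _).of_ringEquiv (AddMonoid.End.zmodRingEquiv _).symm

section IntFactor

variable {A G : Type} [AddCommGroup A] [AddCommGroup G]

def AddMonoidHom.equivProdKerOfRightInverse (f : G →+ A) (s : A →+ G)
    (hs : Function.RightInverse s f) : G ≃+ A × f.ker where
  toFun x := (f x, ⟨x - s (f x), by simp [hs (f x)]⟩)
  invFun p := s p.1 + p.2
  left_inv x := by simp
  right_inv p := by
    have hp : f p.2 = 0 := p.2.2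
    ext <;> simp [hs p.1, hp]
  map_add' x y := by
    ext <;> simp only [map_add, Prod.fst_add, Prod.snd_add, AddSubgroup.coe_add]
    abel

theorem AddMonoidHom.eq_zero_or_exists_addEquiv_int_prod (φ : G →+ ℤ) :
    φ = 0 ∨ ∃ (m : ℤ) (K : AddSubgroup G) (e : G ≃+ ℤ × K), ∀ g, φ g = m * (e g).1 := by
  obtain ⟨m, hm⟩ := Int.subgroup_cyclic φ.range
  rw [← AddSubgroup.zmultiples_eq_closure] at hm
  have hdvd (g : G) : m ∣ φ g := Int.mem_zmultiples_iff.mp (hm ▸ ⟨g, rfl⟩)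
  rcases eq_or_ne m 0 with rfl | hm0
  · exact .inl (AddMonoidHom.ext fun g => zero_dvd_iff.mp (hdvd g))
  obtain ⟨g₀, hg₀⟩ : m ∈ φ.range := hm ▸ AddSubgroup.mem_zmultiples m
  let ρ : G →+ ℤ := .mk' (fun g => φ g / m) fun g h => by
    rw [map_add, Int.add_ediv_of_dvd_left (hdvd g)]
  have hρ : Function.RightInverse (zmultiplesHom G g₀) ρ := fun n => by
    simp [ρ, hg₀, hm0]
  refine .inr ⟨m, ρ.ker, ρ.equivProdKerOfRightInverse _ hρ, fun g => ?_⟩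
  exact (Int.mul_ediv_cancel' (hdvd g)).symm

theorem exists_addAut_int_prod_fst_eq_of_isCoprime {a m : ℤ} (h : IsCoprime a m) :
    ∃ T : ℤ × ℤ ≃+ ℤ × ℤ, ∀ x, (T x).1 = a * x.1 + m * x.2 := by
  obtain ⟨u, v, huv⟩ := h
  refine ⟨{ toFun x := (a * x.1 + m * x.2, -v * x.1 + u * x.2)
            invFun x := (u * x.1 - m * x.2, v * x.1 + a * x.2)
            left_inv x := ?_
            right_inv x := ?_
            map_add' x y := ?_ }, fun _ => rfl⟩
  · ext
    · linear_combination x.1 * huv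
    · linear_combination x.2 * huv
  · ext
    · linear_combination x.1 * huv
    · linear_combination x.2 * huv
  · ext <;> simp only [Prod.fst_add, Prod.snd_add] <;> ring

theorem exists_addAut_int_prod_fst_eq (f : ℤ × G →+ ℤ) (hf : Function.Surjective f) :
    ∃ Θ : ℤ × G ≃+ ℤ × G, ∀ p, (Θ p).1 = f p := by
  obtain ⟨q, hq⟩ := hf 1
  have hfa (p : ℤ × G) : f p = f (1, 0) * p.1 + f (0, p.2) := by
    rw [f.apply_prod_eq_add, mul_comm, ← smul_eq_mul, ← map_zsmul, Prod.smul_mk, smul_zero,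
      smul_eq_mul, mul_one]
  rcases (f.comp (.inr ℤ G)).eq_zero_or_exists_addEquiv_int_prod with hφ | ⟨m, K, e, hφ⟩
  · have hφ' (g : G) : f (0, g) = 0 := DFunLike.congr_fun hφ g
    have hunit : IsUnit (f (1, 0)) :=
      IsUnit.of_mul_eq_one q.1 (by linear_combination hq - hfa q - hφ' q.2)
    apply exists_addAut_fst_eq_of_isUnit
    have hα : f.comp (.inl ℤ G) = ((f (1, 0) : ℤ) : AddMonoid.End ℤ) :=
      AddMonoidHom.ext_int (mul_one _).symm
    rw [hα]
    exact hunit.map (Int.castRingHom _)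
  · have hφ' (g : G) : f (0, g) = m * (e g).1 := hφ g
    have hcop : IsCoprime (f (1, 0)) m :=
      ⟨q.1, (e q.2).1, by linear_combination hq - hfa q - hφ' q.2⟩
    obtain ⟨T, hT⟩ := exists_addAut_int_prod_fst_eq_of_isCoprime hcop
    refine ⟨((AddEquiv.refl ℤ).prodCongr e).trans <| AddEquiv.prodAssoc.symm.trans <|
      (T.prodCongr (.refl K)).trans <| AddEquiv.prodAssoc.trans ((AddEquiv.refl ℤ).prodCongr e.symm),
      fun p => ?_⟩
    show (T (p.1, (e p.2).1)).1 = f p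
    rw [hT, hfa p, hφ']

theorem Cancellable.int : Cancellable ℤ :=
  .of_forall_exists_addAut fun _ _ f _ hs => exists_addAut_int_prod_fst_eq f hs.surjective

end IntFactor

/-- Walker, Cohn: every finitely generated abelian group is cancellable. -/
theorem cancellable_of_fg (A : Type) [AddCommGroup A] (hfg : AddGroup.FG A) :
    Cancellable A := by
  obtain ⟨n, ι, _, p, hp, e, ⟨f⟩⟩ := AddCommGroup.equiv_free_prod_directSum_zmod A
  refine .of_addEquiv f.symm (.prod ?_ ?_)
  · exact .of_addEquiv Finsupp.addEquivFunOnFinite.symm (.pi _ fun _ => .int)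
  · exact .of_addEquiv (DirectSum.addEquivProd _).symm
      (.pi _ fun i => cancellable_zmod_prime_pow (hp i) (e i))
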